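/- arXiv:1302.6047 — 3 statements merged into one kernel-verified Lean document; each statement's English description precedes it below -/
import Mathlib

section
/- Let B = (B_a)_{a ≥ 0} be a real-valued stochastic process on a probability space such that each B_a is square-integrable and E[B_a B_b] = (a^{2H} + b^{2H} − |a−b|^{2H})/2 for all a, b ≥ 0 (the covariance of fractional Brownian motion with Hurst parameter H ∈ (1/2,1)). Fix α > 0, set a_t := (H/α) e^{αt/H} for t ∈ ℝ, and define X_t := e^{−αt} B_{a_t}. Then for all s, t ∈ ℝ, E[X_t X_s] = (H/α)^{2H} [ (e^{α(t−s)} + e^{−α(t−s)})/2 − (1/2) e^{α|t−s|} (1 − e^{−α|t−s|/H})^{2H} ]. In particular the covariance of X depends only on |t−s|, so X is a (wide-sense) stationary process. -/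
open MeasureTheory Real

/-! The substitution `a = (H/α) e^{αt/H}` turns the fBm covariance `R_H` into a function of
`t − s`: the homogeneity `R_H(ca, cb) = c^{2H} R_H(a, b)` pulls out the constant `(H/α)^{2H}`,
the powers `(e^{αt/H})^{2H} = e^{2αt}` are cancelled by the prefactor `e^{−αt} e^{−αs}`
up to `e^{±α(t−s)}`, and `|e^x − e^y| = e^{max x y} (1 − e^{−|x−y|})` makes the increment term
depend on `|t − s|` only. -/

noncomputable def fbmCov (H a b : ℝ) : ℝ :=
  (a ^ (2 * H) + b ^ (2 * H) - |a - b| ^ (2 * H)) / 2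

theorem fbmCov_const_mul {H c a b : ℝ} (hc : 0 ≤ c) (ha : 0 ≤ a) (hb : 0 ≤ b) :
    fbmCov H (c * a) (c * b) = c ^ (2 * H) * fbmCov H a b := by
  simp only [fbmCov, ← mul_sub, abs_mul, abs_of_nonneg hc,
    mul_rpow hc ha, mul_rpow hc hb, mul_rpow hc (abs_nonneg _)]
  ring

theorem abs_exp_sub_exp (x y : ℝ) :
    |exp x - exp y| = exp ((x + y + |x - y|) / 2) * (1 - exp (-|x - y|)) := by
  rcases le_total y x with h | h
  · rw [abs_of_nonneg (sub_nonneg.2 (exp_le_exp.2 h)), abs_of_nonneg (sub_nonneg.2 h),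
      mul_sub, mul_one, ← exp_add]
    ring_nf
  · rw [abs_of_nonpos (sub_nonpos.2 (exp_le_exp.2 h)), abs_of_nonpos (sub_nonpos.2 h),
      mul_sub, mul_one, ← exp_add]
    ring_nf

theorem fbmCov_exp_exp (H x y : ℝ) :
    fbmCov H (exp x) (exp y) =
      (exp (2 * H * x) + exp (2 * H * y) -
        exp (H * (x + y + |x - y|)) * (1 - exp (-|x - y|)) ^ (2 * H)) / 2 := by
  have h_one_sub : 0 ≤ 1 - exp (-|x - y|) :=
    sub_nonneg.2 (exp_le_one_iff.2 (neg_nonpos.2 (abs_nonneg _)))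
  rw [fbmCov, abs_exp_sub_exp, mul_rpow (exp_pos _).le h_one_sub, ← exp_mul, ← exp_mul,
    ← exp_mul]
  ring_nf

theorem exp_mul_exp_mul_fbmCov_lamperti {H α : ℝ} (hH : 0 < H) (hα : 0 < α) (s t : ℝ) :
    exp (-α * t) * exp (-α * s) * fbmCov H (exp (α * t / H)) (exp (α * s / H)) =
      (exp (α * (t - s)) + exp (-α * (t - s))) / 2 -
        (1 / 2) * exp (α * |t - s|) * (1 - exp (-α * |t - s| / H)) ^ (2 * H) := by
  have h_abs : |α * t / H - α * s / H| = α * |t - s| / H := by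
    rw [← sub_div, ← mul_sub, abs_div, abs_mul, abs_of_pos hα, abs_of_pos hH]
  have h_double : ∀ r, 2 * H * (α * r / H) = α * r + α * r := fun r => by field_simp; ring
  have h_sum :
      H * (α * t / H + α * s / H + α * |t - s| / H) = α * t + α * s + α * |t - s| := by
    field_simp
  rw [fbmCov_exp_exp, h_abs, ← neg_div, ← neg_mul, h_double, h_double, h_sum,
    show α * (t - s) = α * t - α * s by ring, show -α * (t - s) = α * s - α * t by ring]
  simp only [neg_mul, exp_add, exp_sub, exp_neg]
  field_simp

theorem lamperti_fbm_covariance_general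
    {Ω : Type*} [MeasurableSpace Ω] (P : Measure Ω)
    (H : ℝ) (hH1 : 1 / 2 < H)
    (B : ℝ → Ω → ℝ)
    (hcov : ∀ a b : ℝ, 0 ≤ a → 0 ≤ b →
      ∫ ω, B a ω * B b ω ∂P = (a ^ (2 * H) + b ^ (2 * H) - |a - b| ^ (2 * H)) / 2)
    (α : ℝ) (hα : 0 < α)
    (a : ℝ → ℝ) (ha : ∀ t : ℝ, a t = (H / α) * exp (α * t / H))
    (X : ℝ → Ω → ℝ)
    (hX : ∀ (t : ℝ) (ω : Ω), X t ω = exp (-α * t) * B (a t) ω) :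
    ∀ s t : ℝ, ∫ ω, X t ω * X s ω ∂P =
      (H / α) ^ (2 * H) *
        ((exp (α * (t - s)) + exp (-α * (t - s))) / 2 -
          (1 / 2) * exp (α * |t - s|) * (1 - exp (-α * |t - s| / H)) ^ (2 * H)) := by
  intro s t
  have hH : 0 < H := by linarith
  have hc : 0 ≤ H / α := (div_pos hH hα).le
  have h_cov : ∫ ω, B (a t) ω * B (a s) ω ∂P =
      (H / α) ^ (2 * H) * fbmCov H (exp (α * t / H)) (exp (α * s / H)) := by
    rw [hcov _ _ (by rw [ha]; positivity) (by rw [ha]; positivity), ha, ha,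
      ← fbmCov_const_mul hc (exp_pos _).le (exp_pos _).le, fbmCov]
  have h_integrand : ∀ ω, X t ω * X s ω =
      exp (-α * t) * exp (-α * s) * (B (a t) ω * B (a s) ω) := fun ω => by
    rw [hX, hX]; ring
  rw [integral_congr_ae (.of_forall h_integrand), integral_const_mul, h_cov,
    ← exp_mul_exp_mul_fbmCov_lamperti hH hα s t]
  ring

/-- Lamperti transform of fractional Brownian motion: if `B` has the fBm covariance
with Hurst parameter `H ∈ (1/2,1)`, `a_t = (H/α) e^{αt/H}` and `X_t = e^{−αt} B_{a_t}`,
then `E[X_t X_s] = (H/α)^{2H} [ (e^{α(t−s)} + e^{−α(t−s)})/2 −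
(1/2) e^{α|t−s|} (1 − e^{−α|t−s|/H})^{2H} ]`; in particular the covariance depends
only on `|t−s|`, so `X` is wide-sense stationary. -/
theorem lamperti_fbm_covariance
    {Ω : Type*} [MeasurableSpace Ω] (P : Measure Ω) [IsProbabilityMeasure P]
    (H : ℝ) (hH1 : 1 / 2 < H) (hH2 : H < 1)
    (B : ℝ → Ω → ℝ)
    (hL2 : ∀ a : ℝ, 0 ≤ a → MemLp (B a) 2 P)
    (hcov : ∀ a b : ℝ, 0 ≤ a → 0 ≤ b →
      ∫ ω, B a ω * B b ω ∂P = (a ^ (2 * H) + b ^ (2 * H) - |a - b| ^ (2 * H)) / 2)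
    (α : ℝ) (hα : 0 < α)
    (a : ℝ → ℝ) (ha : ∀ t : ℝ, a t = (H / α) * exp (α * t / H))
    (X : ℝ → Ω → ℝ)
    (hX : ∀ (t : ℝ) (ω : Ω), X t ω = exp (-α * t) * B (a t) ω) :
    ∀ s t : ℝ, ∫ ω, X t ω * X s ω ∂P =
      (H / α) ^ (2 * H) *
        ((exp (α * (t - s)) + exp (-α * (t - s))) / 2 -
          (1 / 2) * exp (α * |t - s|) * (1 - exp (-α * |t - s| / H)) ^ (2 * H)) :=
  lamperti_fbm_covariance_general P H hH1 B hcov α hα a ha X hX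
end

section
/- Let 1/2 < H < 1 and θ > 0. Then lim_{T → ∞} (1/T) ∫_H^{H e^{T/H}} (1/q) ( ∫_{H/q}^{1 + H/q} y^{(θ−1)H} |1−y|^{2H−2} dy ) dq = (1/H) B((θ−1)H + 1, 2H−1), where B denotes the Beta function. -/
open MeasureTheory Real Filter Set intervalIntegral Topology

/-- The complete Beta function `B(x,y) = Γ(x)Γ(y)/Γ(x+y)`. -/
noncomputable def betaFn (x y : ℝ) : ℝ := Gamma x * Gamma y / Gamma (x + y)

lemma meas_abs_rpow (r : ℝ) : AEStronglyMeasurable (fun x : ℝ => |x| ^ r) volume := by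
  apply Measurable.aestronglyMeasurable; measurability

lemma intInt_abs_rpow {r : ℝ} (hr : -1 < r) (a b : ℝ) :
    IntervalIntegrable (fun x : ℝ => |x| ^ r) volume a b := by
  have h0 : ∀ c : ℝ, IntervalIntegrable (fun x : ℝ => |x| ^ r) volume 0 c := by
    intro c
    rcases le_or_gt 0 c with hc | hc
    · refine (intervalIntegrable_rpow' (a := 0) (b := c) hr).mono_fun
        (meas_abs_rpow r).restrict ?_
      filter_upwards [ae_restrict_mem measurableSet_uIoc] with x hx
      rw [Set.uIoc_of_le hc] at hx
      rw [abs_of_pos hx.1]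
    · have h1 : IntervalIntegrable (fun x : ℝ => (0 - x) ^ r) volume (0 - 0) (0 - -c) :=
        (intervalIntegrable_rpow' (a := 0) (b := -c) hr).comp_sub_left 0
      simp only [zero_sub, sub_neg_eq_add, zero_add, sub_zero] at h1
      refine (h1.mono_fun (meas_abs_rpow r).restrict ?_)
      filter_upwards [ae_restrict_mem measurableSet_uIoc] with x hx
      rw [Set.uIoc_comm, Set.uIoc_of_le hc.le] at hx
      rw [abs_of_nonpos hx.2]
  exact ((h0 a).symm.trans (h0 b))

lemma intInt_abs_sub_rpow {r : ℝ} (hr : -1 < r) (c a b : ℝ) :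
    IntervalIntegrable (fun x : ℝ => |x - c| ^ r) volume a b := by
  have := (intInt_abs_rpow hr (a + -c) (b + -c)).comp_add_right (-c)
  simpa [sub_eq_add_neg] using this

lemma meas_abs_rpow' (r : ℝ) : Measurable (fun x : ℝ => |x| ^ r) := by measurability

lemma meas_psi (p r : ℝ) :
    AEStronglyMeasurable (fun y : ℝ => |y| ^ p * |1 - y| ^ r) volume :=
  ((meas_abs_rpow' p).mul ((meas_abs_rpow' r).comp
    (measurable_const.sub measurable_id))).aestronglyMeasurable

lemma psi_int {p r : ℝ} (hp : -1 < p) (hr1 : -1 < r) (hr0 : r < 0) (a b : ℝ) :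
    IntervalIntegrable (fun y : ℝ => |y| ^ p * |1 - y| ^ r) volume a b := by
  have key1 : ∀ a b : ℝ, a ≤ 1/2 → b ≤ 1/2 →
      IntervalIntegrable (fun y : ℝ => |y| ^ p * |1 - y| ^ r) volume a b := by
    intro a b ha hb
    refine ((intInt_abs_rpow hp a b).const_mul ((1/2 : ℝ) ^ r)).mono_fun
      (meas_psi p r).restrict ?_
    filter_upwards [ae_restrict_mem measurableSet_uIoc] with y hy
    have hy' : y ∈ Set.Icc (min a b) (max a b) := Set.Ioc_subset_Icc_self hy
    have hy2 : y ≤ 1/2 := le_trans hy'.2 (max_le ha hb)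
    have h1 : |1 - y| ^ r ≤ (1/2 : ℝ) ^ r := by
      apply Real.rpow_le_rpow_of_nonpos (by norm_num) _ hr0.le
      rw [abs_of_nonneg (by linarith)]; linarith
    have hnn : (0:ℝ) ≤ |y| ^ p := Real.rpow_nonneg (abs_nonneg _) _
    rw [Real.norm_eq_abs, Real.norm_eq_abs,
      abs_of_nonneg (mul_nonneg hnn (Real.rpow_nonneg (abs_nonneg _) _)),
      abs_of_nonneg (mul_nonneg (Real.rpow_nonneg (by norm_num) _) hnn)]
    calc |y| ^ p * |1 - y| ^ r ≤ |y| ^ p * (1/2:ℝ) ^ r :=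
          mul_le_mul_of_nonneg_left h1 hnn
      _ = (1/2:ℝ) ^ r * |y| ^ p := mul_comm _ _
  have key2 : ∀ a b : ℝ, 1/2 ≤ a → 1/2 ≤ b →
      IntervalIntegrable (fun y : ℝ => |y| ^ p * |1 - y| ^ r) volume a b := by
    intro a b ha hb
    set M : ℝ := max a b with hM
    set C : ℝ := (1/2 : ℝ) ^ p + M ^ p with hC
    refine ((intInt_abs_sub_rpow hr1 1 a b).const_mul C).mono_fun
      (meas_psi p r).restrict ?_
    filter_upwards [ae_restrict_mem measurableSet_uIoc] with y hy
    have hy' : y ∈ Set.Icc (min a b) (max a b) := Set.Ioc_subset_Icc_self hy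
    have hy1 : 1/2 ≤ y := le_trans (le_min ha hb) hy'.1
    have h1 : |y| ^ p ≤ C := by
      rw [abs_of_nonneg (by linarith)]
      rcases le_or_gt 0 p with hp0 | hp0
      · have : y ^ p ≤ M ^ p := Real.rpow_le_rpow (by linarith) hy'.2 hp0
        have h2 : (0:ℝ) ≤ (1/2:ℝ) ^ p := Real.rpow_nonneg (by norm_num) _
        rw [hC]; linarith
      · have : y ^ p ≤ (1/2:ℝ) ^ p :=
          Real.rpow_le_rpow_of_nonpos (by norm_num) hy1 hp0.le
        have h2 : (0:ℝ) ≤ M ^ p := Real.rpow_nonneg (by linarith [hy'.2]) _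
        rw [hC]; linarith
    have hnn : (0:ℝ) ≤ |1 - y| ^ r := Real.rpow_nonneg (abs_nonneg _) _
    have hCnn : (0:ℝ) ≤ C := le_trans (Real.rpow_nonneg (abs_nonneg _) _) h1
    rw [Real.norm_eq_abs, Real.norm_eq_abs,
      abs_of_nonneg (mul_nonneg (Real.rpow_nonneg (abs_nonneg _) _) hnn),
      abs_of_nonneg (mul_nonneg hCnn (Real.rpow_nonneg (abs_nonneg _) _))]
    have : |y - 1| = |1 - y| := abs_sub_comm _ _
    rw [this]
    exact mul_le_mul_of_nonneg_right h1 hnn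
  have half : ∀ c : ℝ, IntervalIntegrable (fun y : ℝ => |y| ^ p * |1 - y| ^ r)
      volume c (1/2) := by
    intro c
    rcases le_or_gt c (1/2) with hc | hc
    · exact key1 c (1/2) hc le_rfl
    · exact key2 c (1/2) hc.le le_rfl
  exact (half a).trans (half b).symm

lemma phi_int {p r : ℝ} (hp : -1 < p) (hr1 : -1 < r) (hr0 : r < 0) (a b : ℝ) :
    IntervalIntegrable (fun y : ℝ => y ^ p * |1 - y| ^ r) volume a b := by
  refine (psi_int hp hr1 hr0 a b).mono_fun ?_ ?_
  · refine Measurable.aestronglyMeasurable (Measurable.mul ?_ ((meas_abs_rpow' r).comp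
      (measurable_const.sub measurable_id)))
    measurability
  · filter_upwards with y
    rw [Real.norm_eq_abs, Real.norm_eq_abs, abs_mul,
      abs_of_nonneg (Real.rpow_nonneg (abs_nonneg (1-y)) r),
      abs_of_nonneg (mul_nonneg (Real.rpow_nonneg (abs_nonneg y) p)
        (Real.rpow_nonneg (abs_nonneg (1-y)) r))]
    exact mul_le_mul_of_nonneg_right (Real.abs_rpow_le_abs_rpow _ _)
      (Real.rpow_nonneg (abs_nonneg _) _)

lemma beta_eq {p r : ℝ} (hp : -1 < p) (hr : -1 < r) :
    ∫ y in (0:ℝ)..1, y ^ p * (1 - y) ^ r = betaFn (p + 1) (r + 1) := by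
  have hu : (0:ℝ) < p + 1 := by linarith
  have hv : (0:ℝ) < r + 1 := by linarith
  have hc := Complex.Gamma_mul_Gamma_eq_betaIntegral
    (s := ((p + 1 : ℝ) : ℂ)) (t := ((r + 1 : ℝ) : ℂ))
    (by simpa using hu) (by simpa using hv)
  have h1 : Complex.betaIntegral ((p + 1 : ℝ) : ℂ) ((r + 1 : ℝ) : ℂ)
      = ((∫ y in (0:ℝ)..1, y ^ p * (1 - y) ^ r : ℝ) : ℂ) := by
    rw [Complex.betaIntegral, ← intervalIntegral.integral_ofReal]
    apply intervalIntegral.integral_congr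
    intro x hx
    rw [Set.uIcc_of_le (by norm_num : (0:ℝ) ≤ 1)] at hx
    have e1 : ((p + 1 : ℝ) : ℂ) - 1 = ((p : ℝ) : ℂ) := by push_cast; ring
    have e2 : ((r + 1 : ℝ) : ℂ) - 1 = ((r : ℝ) : ℂ) := by push_cast; ring
    have e3 : (1 : ℂ) - (x : ℂ) = ((1 - x : ℝ) : ℂ) := by push_cast; ring
    simp only [e1, e2, e3]
    rw [← Complex.ofReal_cpow hx.1, ← Complex.ofReal_cpow (by linarith [hx.2]),
      ← Complex.ofReal_mul]
  rw [h1] at hc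
  have e4 : ((p + 1 : ℝ) : ℂ) + ((r + 1 : ℝ) : ℂ) = ((p + 1 + (r + 1) : ℝ) : ℂ) := by
    push_cast; ring
  rw [e4, Complex.Gamma_ofReal, Complex.Gamma_ofReal, Complex.Gamma_ofReal,
    ← Complex.ofReal_mul, ← Complex.ofReal_mul] at hc
  have hreal : Gamma (p + 1) * Gamma (r + 1)
      = Gamma (p + 1 + (r + 1)) * ∫ y in (0:ℝ)..1, y ^ p * (1 - y) ^ r :=
    Complex.ofReal_injective hc
  have hGne : Gamma (p + 1 + (r + 1)) ≠ 0 :=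
    (Real.Gamma_pos_of_pos (by linarith)).ne'
  rw [betaFn, hreal]
  field_simp

lemma cesaro {f : ℝ → ℝ} (hint : ∀ a b : ℝ, IntervalIntegrable f volume a b) {l : ℝ}
    (hf : Tendsto f atTop (𝓝 l)) :
    Tendsto (fun T : ℝ => (1 / T) * ∫ u in (0:ℝ)..T, f u) atTop (𝓝 l) := by
  rw [Metric.tendsto_atTop] at hf ⊢
  intro ε hε
  obtain ⟨A0, hA0⟩ := hf (ε/2) (by linarith)
  set A := max A0 0 with hA
  have hAnn : 0 ≤ A := le_max_right _ _
  have hA0' : ∀ x ≥ A, |f x - l| < ε/2 := fun x hx => by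
    have := hA0 x (le_trans (le_max_left _ _) hx)
    rwa [Real.dist_eq] at this
  set I0 := ∫ u in (0:ℝ)..A, f u with hI0
  set C := |I0| + A * |l| with hC
  have hCnn : 0 ≤ C := add_nonneg (abs_nonneg _) (mul_nonneg hAnn (abs_nonneg _))
  refine ⟨max A (max 1 (2 * C / ε + 1)), fun T hT => ?_⟩
  have hTA : A ≤ T := le_trans (le_max_left _ _) hT
  have hT1 : (1:ℝ) ≤ T := le_trans (le_trans (le_max_left _ _) (le_max_right _ _)) hT
  have hTC : 2 * C / ε + 1 ≤ T := le_trans (le_trans (le_max_right _ _) (le_max_right _ _)) hT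
  have hT0 : 0 < T := lt_of_lt_of_le one_pos hT1
  rw [Real.dist_eq]
  have hsplit : (∫ u in (0:ℝ)..T, f u) = I0 + ∫ u in A..T, f u :=
    (intervalIntegral.integral_add_adjacent_intervals (hint 0 A) (hint A T)).symm
  have htail : |(∫ u in A..T, f u) - (T - A) * l| ≤ ε / 2 * (T - A) := by
    have h1 : (∫ u in A..T, f u) - (T - A) * l = ∫ u in A..T, (f u - l) := by
      rw [intervalIntegral.integral_sub (hint A T) intervalIntegrable_const,
        intervalIntegral.integral_const]
      simp [smul_eq_mul]
    rw [h1]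
    have h2 := intervalIntegral.norm_integral_le_of_norm_le_const
      (C := ε / 2) (f := fun u => f u - l) (a := A) (b := T) ?_
    · rwa [Real.norm_eq_abs, abs_of_nonneg (by linarith : (0:ℝ) ≤ T - A)] at h2
    · intro x hx
      rw [Set.uIoc_of_le hTA] at hx
      rw [Real.norm_eq_abs]
      exact (hA0' x hx.1.le).le
  have key : |(∫ u in (0:ℝ)..T, f u) - T * l| ≤ C + ε / 2 * T := by
    rw [hsplit]
    have e : I0 + (∫ u in A..T, f u) - T * l
        = (I0 + (-(A * l))) + ((∫ u in A..T, f u) - (T - A) * l) := by ring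
    rw [e]
    have h2 : |I0 + (-(A * l))| ≤ C := by
      refine le_trans (abs_add_le _ _) ?_
      rw [abs_neg, abs_mul, abs_of_nonneg hAnn, hC]
    refine le_trans (abs_add_le _ _) ?_
    have h3 : ε / 2 * (T - A) ≤ ε / 2 * T := by nlinarith
    linarith [htail]
  have habs : 1 / T * (∫ u in (0:ℝ)..T, f u) - l
      = ((∫ u in (0:ℝ)..T, f u) - T * l) / T := by
    field_simp
  rw [habs, abs_div, abs_of_pos hT0]
  have hfin : C / T < ε / 2 := by
    rw [div_lt_iff₀ hT0]
    have h2 := mul_le_mul_of_nonneg_right hTC hε.le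
    rw [add_mul, div_mul_cancel₀ _ hε.ne'] at h2
    nlinarith
  have hle : |(∫ u in (0:ℝ)..T, f u) - T * l| / T ≤ (C + ε / 2 * T) / T := by
    gcongr
  have heq : (C + ε / 2 * T) / T = C / T + ε / 2 := by
    rw [add_div, mul_div_assoc, div_self hT0.ne', mul_one]
  calc |(∫ u in (0:ℝ)..T, f u) - T * l| / T ≤ (C + ε / 2 * T) / T := hle
    _ = C / T + ε / 2 := heq
    _ < ε := by linarith



/-- For `1/2 < H < 1` and `θ > 0`,
`lim_{T→∞} (1/T) ∫_H^{He^{T/H}} (1/q)(∫_{H/q}^{1+H/q} y^{(θ−1)H}|1−y|^{2H−2} dy) dq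
  = (1/H) B((θ−1)H+1, 2H−1)`. -/
theorem fou2_cesaro_limit
    (H θ : ℝ) (hH1 : 1 / 2 < H) (hH2 : H < 1) (hθ : 0 < θ) :
    Tendsto
      (fun T : ℝ =>
        (1 / T) *
          ∫ q in H..(H * exp (T / H)),
            (1 / q) * ∫ y in (H / q)..(1 + H / q), y ^ ((θ - 1) * H) * |1 - y| ^ (2 * H - 2))
      atTop
      (nhds ((1 / H) * betaFn ((θ - 1) * H + 1) (2 * H - 1))) := by
  have hH0 : 0 < H := by linarith
  set p := (θ - 1) * H with hp'
  set r := 2 * H - 2 with hr'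
  have hp : -1 < p := by rw [hp']; nlinarith
  have hr1 : -1 < r := by rw [hr']; linarith
  have hr0 : r < 0 := by rw [hr']; linarith
  have hφint : ∀ a b : ℝ, IntervalIntegrable (fun y : ℝ => y ^ p * |1 - y| ^ r) volume a b :=
    phi_int hp hr1 hr0
  set F : ℝ → ℝ := fun t => ∫ x in (0:ℝ)..t, x ^ p * |1 - x| ^ r with hF
  have hFcont : Continuous F := intervalIntegral.continuous_primitive hφint 0
  have hFsub : ∀ a b : ℝ, (∫ y in a..b, y ^ p * |1 - y| ^ r) = F b - F a := by
    intro a b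
    have h := intervalIntegral.integral_add_adjacent_intervals (hφint 0 a) (hφint a b)
    simp only [hF]
    linarith
  have hF0 : F 0 = 0 := intervalIntegral.integral_same
  have hL : F 1 = betaFn (p + 1) (r + 1) := by
    rw [← beta_eq hp hr1]
    simp only [hF]
    apply intervalIntegral.integral_congr
    intro x hx
    rw [Set.uIcc_of_le (by norm_num : (0:ℝ) ≤ 1)] at hx
    show x ^ p * |1 - x| ^ r = x ^ p * (1 - x) ^ r
    rw [abs_of_nonneg (by linarith [hx.2] : (0:ℝ) ≤ 1 - x)]
  set hfun : ℝ → ℝ := fun u => F (1 + exp (-u)) - F (exp (-u)) with hhfun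
  have hfc : Continuous hfun := by
    apply Continuous.sub
    · exact hFcont.comp (continuous_const.add (Real.continuous_exp.comp continuous_neg))
    · exact hFcont.comp (Real.continuous_exp.comp continuous_neg)
  have hmain : ∀ T : ℝ,
      (∫ q in H..(H * exp (T / H)),
        (1 / q) * ∫ y in (H / q)..(1 + H / q), y ^ p * |1 - y| ^ r)
      = ∫ u in (0:ℝ)..(T / H), hfun u := by
    intro T
    have hg : ContinuousOn (fun q : ℝ => (1 / q) * (F (1 + H / q) - F (H / q)))
        ((fun u => H * exp u) '' Set.uIcc 0 (T / H)) := by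
      have hsubset : ((fun u => H * exp u) '' Set.uIcc 0 (T / H)) ⊆ Set.Ioi 0 := by
        rintro q ⟨x, -, rfl⟩
        simp only [Set.mem_Ioi]
        have := Real.exp_pos x
        positivity
      refine ContinuousOn.mono ?_ hsubset
      have hne : ∀ q ∈ Set.Ioi (0:ℝ), q ≠ 0 := fun q hq => ne_of_gt hq
      apply ContinuousOn.mul
      · exact continuousOn_const.div continuousOn_id hne
      · apply ContinuousOn.sub
        · exact hFcont.comp_continuousOn
            (continuousOn_const.add (continuousOn_const.div continuousOn_id hne))
        · exact hFcont.comp_continuousOn (continuousOn_const.div continuousOn_id hne)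
    have hsub := intervalIntegral.integral_comp_smul_deriv'
      (a := 0) (b := T / H) (f := fun u => H * exp u) (f' := fun u => H * exp u)
      (g := fun q => (1 / q) * (F (1 + H / q) - F (H / q)))
      (fun x _ => by simpa [mul_comm] using (Real.hasDerivAt_exp x).const_mul H)
      ((continuous_const.mul Real.continuous_exp).continuousOn) hg
    have himg : ∀ x : ℝ, (H * exp x) •
        (((fun q => (1 / q) * (F (1 + H / q) - F (H / q))) ∘ (fun u => H * exp u)) x)
        = hfun x := by
      intro x
      have hex : exp x ≠ 0 := (Real.exp_pos x).ne'
      have h1 : H * exp x ≠ 0 := mul_ne_zero hH0.ne' hex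
      have h2 : H / (H * exp x) = exp (-x) := by
        rw [Real.exp_neg]
        field_simp
      simp only [Function.comp, smul_eq_mul, hhfun]
      rw [h2]
      field_simp
    calc ∫ q in H..(H * exp (T / H)),
          (1 / q) * ∫ y in (H / q)..(1 + H / q), y ^ p * |1 - y| ^ r
        = ∫ q in H..(H * exp (T / H)), (1 / q) * (F (1 + H / q) - F (H / q)) := by
          simp only [hFsub]
      _ = ∫ q in ((fun u => H * exp u) 0)..((fun u => H * exp u) (T / H)),
            (1 / q) * (F (1 + H / q) - F (H / q)) := by
          norm_num
      _ = ∫ x in (0:ℝ)..(T / H), (H * exp x) •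
            (((fun q => (1 / q) * (F (1 + H / q) - F (H / q))) ∘ (fun u => H * exp u)) x) :=
          hsub.symm
      _ = ∫ u in (0:ℝ)..(T / H), hfun u :=
          intervalIntegral.integral_congr (fun x _ => himg x)
  have hces : Tendsto (fun S : ℝ => (1 / S) * ∫ u in (0:ℝ)..S, hfun u) atTop (𝓝 (F 1)) := by
    apply cesaro (fun a b => hfc.intervalIntegrable a b)
    have h1 : Tendsto (fun u : ℝ => exp (-u)) atTop (𝓝 0) :=
      Real.tendsto_exp_neg_atTop_nhds_zero
    have h2 : Tendsto (fun u : ℝ => 1 + exp (-u)) atTop (𝓝 (1 + 0)) :=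
      tendsto_const_nhds.add h1
    rw [add_zero] at h2
    have h3 := ((hFcont.tendsto 1).comp h2).sub ((hFcont.tendsto 0).comp h1)
    rw [hF0, sub_zero] at h3
    exact h3
  have hdiv : Tendsto (fun T : ℝ => T / H) atTop atTop := tendsto_id.atTop_div_const hH0
  have hcomp := (hces.comp hdiv).const_mul (1 / H)
  rw [hL] at hcomp
  have hg1 : (2 * H - 1 : ℝ) = r + 1 := by rw [hr']; ring
  rw [hg1]
  refine hcomp.congr' ?_
  filter_upwards [Filter.eventually_gt_atTop (0:ℝ)] with T hT
  have hTH : T / H ≠ 0 := (div_pos hT hH0).ne'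
  simp only [Function.comp]
  rw [hmain T, one_div_div]
  field_simp
end

section
/- Let 1/2 < H < 1 and θ > 1. Then the triple integral Σ := ∫_{[0,∞)^3} e^{−θy} e^{−θ|z−x|} e^{(1 − 1/H)(x+y+z)} ( |e^{−y/H} − e^{−x/H}| · |1 − e^{−z/H}| )^{2H−2} dx dy dz is finite. (2Σ, up to the normalizing factor θ^2 / (H^2 B((θ−1)H+1, 2H−1)^2), is the asymptotic variance σ^2(θ,H) appearing in the central limit theorem for the least squares estimator of the drift of the fractional Ornstein–Uhlenbeck process of the second kind, valid for the whole range H ∈ (1/2,1).) -/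
open MeasureTheory Real Set

/-!
Write `b = 1/H`, `β = b - 1 > 0` and `α = 2H - 2 ∈ (-1, 0)`. Since
`|e^{-by} - e^{-bx}| = e^{-b min(x,y)} (1 - e^{-b|x-y|})` and `1 - e^{-bu} ≥ (1 - e^{-b}) min(u,1)`,
the singular factor is at most a constant times `e^{2β min(x,y)} min(|x-y|,1)^α min(z,1)^α`.
The growth `e^{2β min(x,y)}` is absorbed by `e^{-β(x+y)}`, and `min(u,1)^α ≤ 1 + ψ(u)` with
`ψ(u) = u^α 1_{(0,1]}(u)` integrable because `α > -1`. This bounds the integrand by a constant times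
`e^{-θy} (e^{-βz} + ψ(z)) (e^{-θ|x-z|} + ψ(|x-y|))`; for fixed `(y, z)` the last factor is a sum of
translates of integrable functions of `x`, so Tonelli gives integrability over `ℝ × (0,∞)²`.
-/

theorem integrable_prod_comp_sub_mul {G E : Type*} [AddGroup G] [MeasurableSpace G]
    [MeasurableAdd G] [MeasurableSub₂ G] [MeasurableSpace E]
    {μ : Measure G} [SFinite μ] [μ.IsAddRightInvariant] {ν : Measure E} [SFinite ν]
    {h : G → ℝ} {A : E → ℝ} {L : E → G} (hh : Integrable h μ) (hhm : Measurable h)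
    (hA : Integrable A ν) (hL : Measurable L) :
    Integrable (fun p : G × E => h (p.1 - L p.2) * A p.2) (μ.prod ν) := by
  have hm : AEStronglyMeasurable (fun p : G × E => h (p.1 - L p.2) * A p.2) (μ.prod ν) :=
    (hhm.comp (measurable_fst.sub (hL.comp measurable_snd))).aestronglyMeasurable.mul
      hA.aestronglyMeasurable.comp_snd
  refine (integrable_prod_iff' hm).2
    ⟨ae_of_all _ fun q => (hh.comp_sub_right (L q)).mul_const (A q), ?_⟩
  have hslice : ∀ q, ∫ x, ‖h (x - L q) * A q‖ ∂μ = (∫ x, ‖h x‖ ∂μ) * ‖A q‖ := fun q => by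
    simp only [norm_mul, integral_mul_const, integral_sub_right_eq_self (‖h ·‖)]
  simpa only [hslice] using hA.norm.const_mul _

theorem integrable_comp_abs_of_integrableOn_Ioi {f : ℝ → ℝ} (hf : IntegrableOn f (Ioi 0)) :
    Integrable fun x => f |x| := by
  have hIoi : IntegrableOn (fun x => f |x|) (Ioi 0) :=
    hf.congr_fun (fun x hx => by rw [abs_of_pos (mem_Ioi.mp hx)]) measurableSet_Ioi
  have hIic : IntegrableOn (fun x => f |x|) (Iic 0) := by
    have hneg : MeasurableEmbedding fun x : ℝ => -x := (Homeomorph.neg ℝ).measurableEmbedding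
    rw [← Measure.map_neg_eq_self (volume : Measure ℝ), hneg.integrableOn_map_iff]
    simp_rw [Function.comp_def, abs_neg, neg_preimage, neg_Iic, neg_zero]
    exact (integrableOn_Ici_iff_integrableOn_Ioi).mpr hIoi
  rw [← integrableOn_univ, ← Iic_union_Ioi (a := (0 : ℝ))]
  exact hIic.union hIoi

noncomputable def truncatedRpow (a : ℝ) : ℝ → ℝ := (Ioc 0 1).indicator (· ^ a)

theorem truncatedRpow_nonneg (a u : ℝ) : 0 ≤ truncatedRpow a u :=
  indicator_nonneg (fun _ hu => rpow_nonneg hu.1.le _) u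

@[fun_prop]
theorem measurable_truncatedRpow (a : ℝ) : Measurable (truncatedRpow a) :=
  (measurable_id.pow_const a).indicator measurableSet_Ioc

theorem integrable_truncatedRpow {a : ℝ} (ha : -1 < a) : Integrable (truncatedRpow a) := by
  refine IntegrableOn.integrable_indicator ?_ measurableSet_Ioc
  rw [← intervalIntegrable_iff_integrableOn_Ioc_of_le zero_le_one]
  exact intervalIntegral.intervalIntegrable_rpow' ha

theorem min_one_rpow_le_one_add_truncatedRpow {a u : ℝ} (hu : 0 < u) :
    min u 1 ^ a ≤ 1 + truncatedRpow a u := by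
  rcases le_total u 1 with h | h
  · rw [min_eq_left h, truncatedRpow, indicator_of_mem (show u ∈ Ioc 0 1 from ⟨hu, h⟩)]
    linarith
  · rw [min_eq_right h, one_rpow]
    linarith [truncatedRpow_nonneg a u]

theorem mul_min_one_le_one_sub_exp_neg_mul {b u : ℝ} (hb : 0 ≤ b) (hu : 0 ≤ u) :
    (1 - exp (-b)) * min u 1 ≤ 1 - exp (-u * b) := by
  rcases le_total u 1 with h | h
  · rw [min_eq_left h]
    have hconv := convexOn_exp.2 (mem_univ (-b)) (mem_univ 0) hu (sub_nonneg.2 h) (by ring)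
    simp only [smul_eq_mul, mul_zero, add_zero, exp_zero, mul_one] at hconv
    rw [show -u * b = u * -b by ring]
    linarith
  · rw [min_eq_right h, mul_one]
    gcongr
    nlinarith

theorem one_sub_exp_neg_mul_rpow_le {a b u : ℝ} (ha : a ≤ 0) (hb : 0 < b) (hu : 0 < u) :
    (1 - exp (-u * b)) ^ a ≤ (1 - exp (-b)) ^ a * (1 + truncatedRpow a u) := by
  have hc : 0 < 1 - exp (-b) := by simp [hb]
  calc (1 - exp (-u * b)) ^ a ≤ ((1 - exp (-b)) * min u 1) ^ a :=
        rpow_le_rpow_of_nonpos (by positivity) (mul_min_one_le_one_sub_exp_neg_mul hb.le hu.le) ha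
    _ = (1 - exp (-b)) ^ a * min u 1 ^ a := mul_rpow hc.le (by positivity)
    _ ≤ (1 - exp (-b)) ^ a * (1 + truncatedRpow a u) := by
        gcongr
        exact min_one_rpow_le_one_add_truncatedRpow hu

theorem abs_exp_neg_mul_sub_exp_neg_mul {b : ℝ} (hb : 0 ≤ b) (x y : ℝ) :
    |exp (-y * b) - exp (-x * b)| = exp (-min x y * b) * (1 - exp (-|x - y| * b)) := by
  rw [mul_sub, mul_one, ← exp_add]
  rcases le_total x y with h | h
  · have hexp : exp (-y * b) ≤ exp (-x * b) := exp_le_exp.2 (by nlinarith)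
    rw [min_eq_left h, abs_of_nonpos (sub_nonpos.2 h), abs_of_nonpos (sub_nonpos.2 hexp)]
    ring_nf
  · have hexp : exp (-x * b) ≤ exp (-y * b) := exp_le_exp.2 (by nlinarith)
    rw [min_eq_right h, abs_of_nonneg (sub_nonneg.2 h), abs_of_nonneg (sub_nonneg.2 hexp)]
    ring_nf

theorem rpow_abs_exp_sub_exp_mul_abs_one_sub_exp_le {a b : ℝ} (ha : a < 0) (hb : 0 < b)
    (x y : ℝ) {z : ℝ} (hz : 0 < z) :
    (|exp (-y * b) - exp (-x * b)| * |1 - exp (-z * b)|) ^ a ≤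
      ((1 - exp (-b)) ^ a) ^ 2 * exp (-min x y * b * a) *
        ((1 + truncatedRpow a |x - y|) * (1 + truncatedRpow a z)) := by
  have hexp_le_one : ∀ {u : ℝ}, 0 ≤ u → exp (-u * b) ≤ 1 := fun hu =>
    exp_le_one_iff.2 (by nlinarith)
  have hrhs : 0 ≤ ((1 - exp (-b)) ^ a) ^ 2 * exp (-min x y * b * a) *
      ((1 + truncatedRpow a |x - y|) * (1 + truncatedRpow a z)) := by
    have := truncatedRpow_nonneg a |x - y|
    have := truncatedRpow_nonneg a z
    positivity
  rw [mul_rpow (abs_nonneg _) (abs_nonneg _), abs_exp_neg_mul_sub_exp_neg_mul hb.le,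
    abs_of_nonneg (sub_nonneg.2 (hexp_le_one hz.le))]
  rcases eq_or_ne x y with rfl | hxy
  · simpa [zero_rpow ha.ne] using hrhs
  have hxy' : 0 < |x - y| := abs_pos.2 (sub_ne_zero.2 hxy)
  rw [mul_rpow (exp_pos _).le (sub_nonneg.2 (hexp_le_one hxy'.le)), ← exp_mul]
  calc exp (-min x y * b * a) * (1 - exp (-|x - y| * b)) ^ a * (1 - exp (-z * b)) ^ a
      = exp (-min x y * b * a) * ((1 - exp (-|x - y| * b)) ^ a * (1 - exp (-z * b)) ^ a) := by
        ring
    _ ≤ exp (-min x y * b * a) * (((1 - exp (-b)) ^ a * (1 + truncatedRpow a |x - y|)) *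
          ((1 - exp (-b)) ^ a * (1 + truncatedRpow a z))) := by
        have hc : 0 ≤ (1 - exp (-b)) ^ a :=
          rpow_nonneg (sub_nonneg.2 (by simpa using hexp_le_one zero_le_one)) a
        have := truncatedRpow_nonneg a |x - y|
        gcongr _ * ?_
        exact mul_le_mul (one_sub_exp_neg_mul_rpow_le ha.le hb hxy')
          (one_sub_exp_neg_mul_rpow_le ha.le hb hz)
          (rpow_nonneg (sub_nonneg.2 (hexp_le_one hz.le)) a) (mul_nonneg hc (by linarith))
    _ = _ := by ring

theorem fou2_integrand_le {H θ : ℝ} (hH0 : 0 < H) (hH1 : H < 1) (hθ : 0 ≤ θ) (x y : ℝ) {z : ℝ}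
    (hz : 0 < z) :
    exp (-θ * y) * exp (-θ * |z - x|) * exp ((1 - 1 / H) * (x + y + z)) *
        (|exp (-y / H) - exp (-x / H)| * |1 - exp (-z / H)|) ^ (2 * H - 2) ≤
      ((1 - exp (-H⁻¹)) ^ (2 * H - 2)) ^ 2 *
        (exp (-θ * y) * (exp (-(H⁻¹ - 1) * z) + truncatedRpow (2 * H - 2) z)) *
        (exp (-θ * |x - z|) + truncatedRpow (2 * H - 2) |x - y|) := by
  set a := 2 * H - 2
  set K := ((1 - exp (-H⁻¹)) ^ a) ^ 2
  set t := truncatedRpow a |x - y|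
  set s := truncatedRpow a z
  have ht := truncatedRpow_nonneg a |x - y|
  have hs := truncatedRpow_nonneg a z
  have hbound : (|exp (-y / H) - exp (-x / H)| * |1 - exp (-z / H)|) ^ a ≤
      K * exp (-min x y * H⁻¹ * a) * ((1 + t) * (1 + s)) := by
    simpa only [div_eq_mul_inv] using
      rpow_abs_exp_sub_exp_mul_abs_one_sub_exp_le (by linarith : a < 0) (inv_pos.2 hH0) x y hz
  have hβ : 0 < H⁻¹ - 1 := sub_pos.2 ((one_lt_inv₀ hH0).2 hH1)
  have hexp : exp ((1 - 1 / H) * (x + y + z)) * exp (-min x y * H⁻¹ * a) ≤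
      exp (-(H⁻¹ - 1) * z) := by
    have hmin : -min x y * H⁻¹ * a = 2 * (H⁻¹ - 1) * min x y := by
      simp only [a]; field_simp; ring
    rw [← exp_add, hmin, one_div]
    apply exp_le_exp.2
    nlinarith [mul_nonneg hβ.le (sub_nonneg.2 (min_le_left x y)),
      mul_nonneg hβ.le (sub_nonneg.2 (min_le_right x y))]
  have hmul_one_add : ∀ {e r : ℝ}, e ≤ 1 → 0 ≤ r → e * (1 + r) ≤ e + r := fun he hr => by
    nlinarith
  calc exp (-θ * y) * exp (-θ * |z - x|) * exp ((1 - 1 / H) * (x + y + z)) *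
        (|exp (-y / H) - exp (-x / H)| * |1 - exp (-z / H)|) ^ a
      ≤ exp (-θ * y) * exp (-θ * |z - x|) * exp ((1 - 1 / H) * (x + y + z)) *
        (K * exp (-min x y * H⁻¹ * a) * ((1 + t) * (1 + s))) := by gcongr
    _ = K * exp (-θ * y) *
          (exp ((1 - 1 / H) * (x + y + z)) * exp (-min x y * H⁻¹ * a) * (1 + s)) *
          (exp (-θ * |x - z|) * (1 + t)) := by rw [abs_sub_comm]; ring
    _ ≤ K * exp (-θ * y) * (exp (-(H⁻¹ - 1) * z) * (1 + s)) *
          (exp (-θ * |x - z|) * (1 + t)) := by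
        gcongr
    _ ≤ K * exp (-θ * y) * (exp (-(H⁻¹ - 1) * z) + s) * (exp (-θ * |x - z|) + t) := by
        gcongr
        · exact hmul_one_add (exp_le_one_iff.2 (by nlinarith)) hs
        · exact hmul_one_add (exp_le_one_iff.2 (by nlinarith [abs_nonneg (x - z)])) ht
    _ = K * (exp (-θ * y) * (exp (-(H⁻¹ - 1) * z) + s)) * (exp (-θ * |x - z|) + t) := by ring

/-- For `1/2 < H < 1` and `θ > 1`, the triple integral
`Σ = ∫_{[0,∞)^3} e^{−θy} e^{−θ|z−x|} e^{(1−1/H)(x+y+z)}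
(|e^{−y/H} − e^{−x/H}| |1 − e^{−z/H}|)^{2H−2} dx dy dz` is finite.  (Up to the
normalizing factor `θ²/(H² B((θ−1)H+1,2H−1)²)`, `2Σ` is the asymptotic variance
`σ²(θ,H)` in the central limit theorem for the least squares estimator of the
drift of the fractional Ornstein–Uhlenbeck process of the second kind, valid for
the whole range `H ∈ (1/2,1)`.) -/
theorem fou2_asymptotic_variance_finite
    (H θ : ℝ) (hH1 : 1 / 2 < H) (hH2 : H < 1) (hθ : 1 < θ) :
    IntegrableOn
      (fun p : ℝ × ℝ × ℝ =>
        exp (-θ * p.2.1) * exp (-θ * |p.2.2 - p.1|) *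
          exp ((1 - 1 / H) * (p.1 + p.2.1 + p.2.2)) *
          (|exp (-p.2.1 / H) - exp (-p.1 / H)| * |1 - exp (-p.2.2 / H)|) ^ (2 * H - 2))
      (Set.Ioi (0:ℝ) ×ˢ Set.Ioi (0:ℝ) ×ˢ Set.Ioi (0:ℝ)) := by
  have hH0 : 0 < H := by linarith
  have hθ0 : 0 < θ := by linarith
  have ha : -1 < 2 * H - 2 := by linarith
  have hβ : 0 < H⁻¹ - 1 := sub_pos.2 ((one_lt_inv₀ hH0).2 hH2)
  set ν : Measure ℝ := volume.restrict (Ioi 0)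
  set A : ℝ × ℝ → ℝ := fun q =>
    exp (-θ * q.1) * (exp (-(H⁻¹ - 1) * q.2) + truncatedRpow (2 * H - 2) q.2)
  have hA : Integrable A (ν.prod ν) :=
    (exp_neg_integrableOn_Ioi 0 hθ0).mul_prod
      ((exp_neg_integrableOn_Ioi 0 hβ).add (integrable_truncatedRpow ha).integrableOn)
  have hexp_abs : Integrable fun u : ℝ => exp (-θ * |u|) :=
    integrable_comp_abs_of_integrableOn_Ioi (f := fun u => exp (-θ * u))
      (exp_neg_integrableOn_Ioi 0 hθ0)
  have htr : Integrable fun u : ℝ => truncatedRpow (2 * H - 2) |u| :=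
    integrable_comp_abs_of_integrableOn_Ioi (integrable_truncatedRpow ha).integrableOn
  have hdom : IntegrableOn (fun p : ℝ × ℝ × ℝ => ((1 - exp (-H⁻¹)) ^ (2 * H - 2)) ^ 2 *
      (exp (-θ * |p.1 - p.2.2|) * A p.2 + truncatedRpow (2 * H - 2) |p.1 - p.2.1| * A p.2))
      (univ ×ˢ Ioi 0 ×ˢ Ioi 0) := by
    rw [IntegrableOn, Measure.volume_eq_prod, ← Measure.prod_restrict, Measure.restrict_univ,
      Measure.volume_eq_prod, ← Measure.prod_restrict]
    exact ((integrable_prod_comp_sub_mul hexp_abs (by fun_prop) hA measurable_snd).add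
      (integrable_prod_comp_sub_mul htr (by fun_prop) hA measurable_fst)).const_mul _
  refine (hdom.mono_set (prod_mono (subset_univ _) subset_rfl)).mono' (by fun_prop)
    (ae_restrict_of_forall_mem (measurableSet_Ioi.prod (measurableSet_Ioi.prod measurableSet_Ioi))
      fun p hp => ?_)
  rw [norm_of_nonneg (by positivity)]
  exact (fou2_integrand_le hH0 hH2 hθ0.le p.1 p.2.1 hp.2.2).trans_eq (by ring)
end
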